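/- arXiv:1205.0593 — 2 statements merged into one kernel-verified Lean document; each statement's English description precedes it below -/
import Mathlib

section
/- Define z_i = y_i x_i + Σ_{1 ≤ j < i} s_{ij} ∈ H for 1 ≤ i ≤ n, and let w_0 ∈ S_n be the longest element, i.e. the permutation with w_0(i) = n + 1 − i for all i. Then for every 1 ≤ i ≤ n one has φ(z_i) = w_0 · z_{w_0(i)} · w_0^{-1} in H, where φ is the involutive algebra automorphism of H with φ(x_i)=y_i, φ(y_i)=x_i, φ(w)=sgn(w)w. -/
noncomputable section

/-- Generators of the rational Cherednik algebra of `S_n` at `t = 0`. -/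
inductive CherGen (n : ℕ) : Type
  | x : Fin n → CherGen n
  | y : Fin n → CherGen n
  | T : Equiv.Perm (Fin n) → CherGen n

namespace Cherednik

variable (n : ℕ)

/-- The free algebra on the generators. -/
abbrev F := FreeAlgebra ℂ (CherGen n)

def fx (i : Fin n) : F n := FreeAlgebra.ι ℂ (CherGen.x i)
def fy (i : Fin n) : F n := FreeAlgebra.ι ℂ (CherGen.y i)
def fT (w : Equiv.Perm (Fin n)) : F n := FreeAlgebra.ι ℂ (CherGen.T w)

/-- `s_{ij}`, the transposition interchanging `i` and `j`. -/
def fs (i j : Fin n) : F n := fT n (Equiv.swap i j)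

/-- The defining relations of the rational Cherednik algebra at `t = 0`. -/
inductive Rel : F n → F n → Prop
  | T_mul (u v : Equiv.Perm (Fin n)) : Rel (fT n u * fT n v) (fT n (u * v))
  | T_one : Rel (fT n 1) 1
  | x_comm (i j : Fin n) : Rel (fx n i * fx n j) (fx n j * fx n i)
  | y_comm (i j : Fin n) : Rel (fy n i * fy n j) (fy n j * fy n i)
  | w_x (w : Equiv.Perm (Fin n)) (i : Fin n) :
      Rel (fT n w * fx n i) (fx n (w i) * fT n w)
  | w_y (w : Equiv.Perm (Fin n)) (i : Fin n) :
      Rel (fT n w * fy n i) (fy n (w i) * fT n w)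
  | yx_same (i : Fin n) :
      Rel (fy n i * fx n i)
        (fx n i * fy n i - ∑ j ∈ Finset.univ.filter (fun j => j ≠ i), fs n i j)
  | yx_ne (i j : Fin n) (h : i ≠ j) :
      Rel (fy n i * fx n j) (fx n j * fy n i + fs n i j)

/-- The rational Cherednik algebra `H` of `S_n` at `t = 0`. -/
abbrev H := RingQuot (Rel n)

def hx (i : Fin n) : H n := RingQuot.mkAlgHom ℂ (Rel n) (fx n i)
def hy (i : Fin n) : H n := RingQuot.mkAlgHom ℂ (Rel n) (fy n i)
def hT (w : Equiv.Perm (Fin n)) : H n := RingQuot.mkAlgHom ℂ (Rel n) (fT n w)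
def hs (i j : Fin n) : H n := hT n (Equiv.swap i j)

end Cherednik

namespace Cherednik

/-- The Cherednik–Dunkl elements `z_i = y_i x_i + Σ_{j<i} s_{ij}`. -/
def z (n : ℕ) (i : Fin n) : H n :=
  hy n i * hx n i + ∑ j ∈ Finset.univ.filter (fun j => j < i), hs n i j

end Cherednik
/-!
Both sides equal `y_i x_i + Σ_{j>i} s_{ij}`. On the left, `φ` sends `z_i` to
`x_i y_i - Σ_{j<i} s_{ij}` (transpositions are odd), and the relation for `y_i x_i` trades
`x_i y_i` for `y_i x_i + Σ_{j≠i} s_{ij}`. On the right, conjugation by `w₀ = Fin.revPerm`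
relabels the indices, and since `w₀` reverses the order, `j < w₀ i` becomes `w₀ j > i`.
-/

namespace Cherednik

variable {n : ℕ}

lemma hT_mul (u v : Equiv.Perm (Fin n)) : hT n u * hT n v = hT n (u * v) := by
  simpa [hT] using RingQuot.mkAlgHom_rel ℂ (Rel.T_mul u v)

lemma hT_one : hT n 1 = 1 := by
  simpa [hT] using RingQuot.mkAlgHom_rel ℂ (Rel.T_one (n := n))

lemma hT_mul_hT_inv (w : Equiv.Perm (Fin n)) : hT n w * hT n w⁻¹ = 1 := by
  rw [hT_mul, mul_inv_cancel, hT_one]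

lemma hT_mul_hx (w : Equiv.Perm (Fin n)) (i : Fin n) :
    hT n w * hx n i = hx n (w i) * hT n w := by
  simpa [hT, hx] using RingQuot.mkAlgHom_rel ℂ (Rel.w_x w i)

lemma hT_mul_hy (w : Equiv.Perm (Fin n)) (i : Fin n) :
    hT n w * hy n i = hy n (w i) * hT n w := by
  simpa [hT, hy] using RingQuot.mkAlgHom_rel ℂ (Rel.w_y w i)

lemma hT_mul_hs (w : Equiv.Perm (Fin n)) (i j : Fin n) :
    hT n w * hs n i j = hs n (w i) (w j) * hT n w := by
  rw [hs, hs, hT_mul, hT_mul, Equiv.mul_swap_eq_swap_mul w i j]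

lemma hy_mul_hx_self (i : Fin n) :
    hy n i * hx n i = hx n i * hy n i - ∑ j ∈ Finset.univ.filter (· ≠ i), hs n i j := by
  simpa [hx, hy, hs, fs, hT, map_sum] using RingQuot.mkAlgHom_rel ℂ (Rel.yx_same i)

lemma hx_mul_hy_self_sub_sum_lt (i : Fin n) :
    hx n i * hy n i - ∑ j ∈ Finset.univ.filter (· < i), hs n i j
      = hy n i * hx n i + ∑ j ∈ Finset.univ.filter (i < ·), hs n i j := by
  have h_split : Finset.univ.filter (· ≠ i)
      = Finset.univ.filter (· < i) ∪ Finset.univ.filter (i < ·) := by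
    ext j
    simp only [Finset.mem_filter, Finset.mem_univ, true_and, Finset.mem_union]
    exact ne_iff_lt_or_gt
  have h_disj : Disjoint (Finset.univ.filter (· < i)) (Finset.univ.filter (i < ·)) :=
    Finset.disjoint_filter.2 fun _ _ h => (lt_asymm h).elim
  rw [hy_mul_hx_self, h_split, Finset.sum_union h_disj]
  abel

lemma hT_mul_z_mul_hT_inv (w : Equiv.Perm (Fin n)) (k : Fin n) :
    hT n w * z n k * hT n w⁻¹
      = hy n (w k) * hx n (w k) + ∑ j ∈ Finset.univ.filter (· < k), hs n (w k) (w j) := by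
  have h_conj : ∀ a b : H n, hT n w * a = b * hT n w → hT n w * a * hT n w⁻¹ = b := by
    intro a b h
    rw [h, mul_assoc, hT_mul_hT_inv, mul_one]
  apply h_conj
  rw [z, mul_add, add_mul, Finset.mul_sum, Finset.sum_mul, ← mul_assoc, hT_mul_hy, mul_assoc,
    hT_mul_hx, ← mul_assoc]
  simp only [hT_mul_hs]

lemma hT_revPerm_conj_z (i : Fin n) :
    hT n Fin.revPerm * z n (Fin.revPerm i) * hT n Fin.revPerm⁻¹
      = hy n i * hx n i + ∑ j ∈ Finset.univ.filter (i < ·), hs n i j := by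
  rw [hT_mul_z_mul_hT_inv, Fin.revPerm_apply, Fin.revPerm_apply, Fin.rev_rev,
    Finset.sum_filter, Finset.sum_filter]
  congr 1
  exact Fintype.sum_equiv Fin.revPerm _ _ fun j => by simp [Fin.lt_rev_iff]

end Cherednik

open Cherednik in
theorem statement4_general (n : ℕ)
    (φ : H n ≃ₐ[ℂ] H n)
    (hφx : ∀ i, φ (hx n i) = hy n i)
    (hφy : ∀ i, φ (hy n i) = hx n i)
    (hφT : ∀ w : Equiv.Perm (Fin n),
      φ (hT n w) = ((Equiv.Perm.sign w : ℤ) : ℂ) • hT n w)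
    (i : Fin n) :
    φ (z n i) = hT n Fin.revPerm * z n (Fin.revPerm i) * hT n Fin.revPerm⁻¹ := by
  have hφs : ∀ j, j < i → φ (hs n i j) = -hs n i j := fun j hj => by
    rw [hs, hφT, Equiv.Perm.sign_swap hj.ne', Units.val_neg, Units.val_one, Int.cast_neg,
      Int.cast_one]
    exact neg_one_smul ℂ (hT n _)
  have hφz : φ (z n i) = hx n i * hy n i - ∑ j ∈ Finset.univ.filter (· < i), hs n i j := by
    rw [z, map_add, map_mul, hφx, hφy, map_sum,
      Finset.sum_congr rfl fun j hj => hφs j (Finset.mem_filter.1 hj).2, Finset.sum_neg_distrib,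
      sub_eq_add_neg]
  rw [hφz, hx_mul_hy_self_sub_sum_lt, hT_revPerm_conj_z]

open Cherednik in
/-- `φ(z_i) = w₀ z_{w₀(i)} w₀⁻¹`, where `w₀` is the longest element of `S_n`
(in zero-indexed terms, `w₀ = Fin.revPerm` reverses `{0,…,n−1}`). -/
theorem statement4 (n : ℕ) (hn : 0 < n)
    (φ : H n ≃ₐ[ℂ] H n)
    (hφx : ∀ i, φ (hx n i) = hy n i)
    (hφy : ∀ i, φ (hy n i) = hx n i)
    (hφT : ∀ w : Equiv.Perm (Fin n),
      φ (hT n w) = ((Equiv.Perm.sign w : ℤ) : ℂ) • hT n w)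
    (i : Fin n) :
    φ (z n i) = hT n Fin.revPerm * z n (Fin.revPerm i) * hT n Fin.revPerm⁻¹ :=
  statement4_general n φ hφx hφy hφT i
end
end

section
/- Let k be a field, V a finite-dimensional k-vector space, B : V × V → k a nondegenerate bilinear form, m a natural number, and W_0 ⊆ W_1 ⊆ … ⊆ W_m = V a chain of subspaces (set W_{−1} = 0) such that B(W_l, W_{l'}) = 0 whenever l + l' < m. Then the following are equivalent: (i) for every 0 ≤ l ≤ m, the induced pairing gr B : (W_l / W_{l−1}) × (W_{m−l} / W_{m−l−1}) → k, given by gr B(f + W_{l−1}, g + W_{m−l−1}) = B(f, g), is nondegenerate; (ii) dim_k(W_l / W_{l−1}) = dim_k(W_{m−l} / W_{m−l−1}) for every 0 ≤ l ≤ m. -/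
/-!
A pairing of finite-dimensional spaces that is nondegenerate on both sides is perfect, which
forces equal dimensions. Conversely, the orthogonality hypothesis puts `W_{m-l-1}` inside the
right orthogonal `W_l^⊥`, of dimension `dim V - dim W_l`. When the graded dimensions are
symmetric, telescoping gives `dim W_{m-l-1} + dim W_l = dim V`, hence `W_{m-l-1} = W_l^⊥`, which
is right nondegeneracy of `gr B`; and a one-sided nondegenerate pairing between spaces of equal
dimension is perfect.
-/

noncomputable section

/-- The "previous" term of a filtration, with the convention `W_{−1} = 0`. -/
def prevFil {k V : Type*} [Field k] [AddCommGroup V] [Module k V]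
    (W : ℕ → Submodule k V) : ℕ → Submodule k V
  | 0 => ⊥
  | l + 1 => W l

open Module LinearMap

namespace LinearMap

variable {k M N : Type*} [Field k] [AddCommGroup M] [Module k M] [AddCommGroup N] [Module k N]
  {p : M →ₗ[k] N →ₗ[k] k}

lemma IsPerfPair.nondegenerate [p.IsPerfPair] : p.Nondegenerate :=
  ⟨separatingLeft_iff_ker_eq_bot.mpr (ker_eq_bot.mpr (IsPerfPair.bijective_left p).injective),
    separatingRight_iff_flip_ker_eq_bot.mpr
      (ker_eq_bot.mpr (IsPerfPair.bijective_right p).injective)⟩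

lemma Nondegenerate.isPerfPair [FiniteDimensional k M] (hp : p.Nondegenerate) : p.IsPerfPair :=
  .of_injective (ker_eq_bot.mp (separatingLeft_iff_ker_eq_bot.mp hp.1))
    (ker_eq_bot.mp (separatingRight_iff_flip_ker_eq_bot.mp hp.2))

lemma SeparatingRight.isPerfPair_of_finrank_eq [FiniteDimensional k M] [FiniteDimensional k N]
    (hp : p.SeparatingRight) (h : finrank k M = finrank k N) : p.IsPerfPair := by
  have hinj : Function.Injective p.flip :=
    ker_eq_bot.mp (separatingRight_iff_flip_ker_eq_bot.mp hp)
  have hsurj : Function.Surjective p.flip :=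
    (injective_iff_surjective_of_finrank_eq_finrank
      (by rw [Subspace.dual_finrank_eq, h])).mp hinj
  simpa using (IsPerfPair.of_bijective p.flip ⟨hinj, hsurj⟩).flip

end LinearMap

section Subquotient

variable {k V : Type*} [Field k] [AddCommGroup V] [Module k V] (B : V →ₗ[k] V →ₗ[k] k)
  {U U' P P' : Submodule k V}

def subquotientPairing (hP : ∀ x ∈ P, ∀ y ∈ U', B x y = 0)
    (hP' : ∀ x ∈ U, ∀ y ∈ P', B x y = 0) :
    (U ⧸ P.comap U.subtype) →ₗ[k] (U' ⧸ P'.comap U'.subtype) →ₗ[k] k :=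
  (B.compl₁₂ U.subtype U'.subtype).liftQ₂ _ _
    (fun x hx => LinearMap.ext fun y => hP x hx y y.2)
    (fun y hy => LinearMap.ext fun x => hP' x x.2 y hy)

variable {B}

lemma subquotientPairing_separatingRight (hP : ∀ x ∈ P, ∀ y ∈ U', B x y = 0)
    (hP' : ∀ x ∈ U, ∀ y ∈ P', B x y = 0) (hU : BilinForm.orthogonal B U ≤ P') :
    (subquotientPairing B hP hP').SeparatingRight := by
  rintro ⟨g⟩ hg
  refine (Submodule.Quotient.mk_eq_zero _).mpr (hU fun f hf => ?_)
  exact hg (Submodule.Quotient.mk ⟨f, hf⟩)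

variable [FiniteDimensional k V]

lemma LinearMap.BilinForm.eq_orthogonal_of_finrank_add_eq (hB : B.SeparatingLeft)
    (hle : P ≤ BilinForm.orthogonal B U) (h : finrank k P + finrank k U = finrank k V) :
    P = BilinForm.orthogonal B U := by
  refine Submodule.eq_of_le_of_finrank_le hle ?_
  have hdim := BilinForm.finrank_add_finrank_orthogonal' (B := B) U
  rw [separatingLeft_iff_ker_eq_bot.mp hB, inf_bot_eq, finrank_bot, add_zero] at hdim
  omega

end Subquotient

section Filtration

variable {k V : Type*} [Field k] [AddCommGroup V] [Module k V] {W : ℕ → Submodule k V} {m l : ℕ}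

abbrev gradedPiece (W : ℕ → Submodule k V) (l : ℕ) : Type _ :=
  W l ⧸ (prevFil W l).comap (W l).subtype

lemma prevFil_le (hchain : ∀ l, l < m → W l ≤ W (l + 1)) (hl : l ≤ m) : prevFil W l ≤ W l := by
  cases l with
  | zero => exact bot_le
  | succ j => exact hchain j (by omega)

lemma prevFil_of_pos (hl : 0 < l) : prevFil W l = W (l - 1) := by
  cases l with
  | zero => omega
  | succ j => rfl

lemma apply_eq_zero_of_mem_prevFil_left (B : V →ₗ[k] V →ₗ[k] k)
    (horth : ∀ l l', l + l' < m → ∀ f ∈ W l, ∀ g ∈ W l', B f g = 0) {l' : ℕ} (h : l + l' ≤ m) :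
    ∀ x ∈ prevFil W l, ∀ y ∈ W l', B x y = 0 := by
  cases l with
  | zero => simp [prevFil]
  | succ j => exact horth j l' (by omega)

lemma apply_eq_zero_of_mem_prevFil_right (B : V →ₗ[k] V →ₗ[k] k)
    (horth : ∀ l l', l + l' < m → ∀ f ∈ W l, ∀ g ∈ W l', B f g = 0) {l' : ℕ} (h : l + l' ≤ m) :
    ∀ x ∈ W l, ∀ y ∈ prevFil W l', B x y = 0 := by
  cases l' with
  | zero => simp [prevFil]
  | succ j => exact horth l j (by omega)

variable [FiniteDimensional k V]

lemma finrank_gradedPiece_add_finrank_prevFil (hl : prevFil W l ≤ W l) :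
    finrank k (gradedPiece W l) + finrank k (prevFil W l) = finrank k (W l) := by
  rw [← (Submodule.comapSubtypeEquivOfLe hl).finrank_eq]
  exact Submodule.finrank_quotient_add_finrank _

lemma finrank_prevFil_add_finrank_of_symm (hchain : ∀ l, l < m → W l ≤ W (l + 1))
    (htop : W m = ⊤)
    (hsymm : ∀ l, l ≤ m → finrank k (gradedPiece W l) = finrank k (gradedPiece W (m - l))) :
    ∀ l, l ≤ m → finrank k (prevFil W l) + finrank k (W (m - l)) = finrank k V := by
  intro l
  induction l with
  | zero =>
    intro _
    show finrank k (⊥ : Submodule k V) + finrank k (W (m - 0)) = _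
    rw [finrank_bot, Nat.sub_zero, htop, finrank_top, zero_add]
  | succ j ih =>
    intro hj
    have hgr := finrank_gradedPiece_add_finrank_prevFil (prevFil_le hchain (l := j) (by omega))
    have hgr' :=
      finrank_gradedPiece_add_finrank_prevFil (prevFil_le hchain (l := m - j) (by omega))
    have hprev : finrank k (prevFil W (m - j)) = finrank k (W (m - (j + 1))) := by
      rw [prevFil_of_pos (by omega), show m - j - 1 = m - (j + 1) by omega]
    have := hsymm j (by omega)
    have := ih (by omega)
    show finrank k (W j) + _ = _
    omega

end Filtration

theorem statement8_general (k V : Type*) [Field k] [AddCommGroup V] [Module k V]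
    [FiniteDimensional k V]
    (B : V →ₗ[k] V →ₗ[k] k)
    (hBl : ∀ v : V, (∀ w : V, B v w = 0) → v = 0)
    (m : ℕ) (W : ℕ → Submodule k V)
    (hchain : ∀ l, l < m → W l ≤ W (l + 1)) (htop : W m = ⊤)
    (horth : ∀ l l', l + l' < m → ∀ f ∈ W l, ∀ g ∈ W l', B f g = 0) :
    (∀ l, l ≤ m →
      ∃ grB : (W l ⧸ (prevFil W l).comap (W l).subtype) →ₗ[k]
          (W (m - l) ⧸ (prevFil W (m - l)).comap (W (m - l)).subtype) →ₗ[k] k,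
        (∀ (f : W l) (g : W (m - l)),
          grB (Submodule.Quotient.mk f) (Submodule.Quotient.mk g) = B (f : V) (g : V)) ∧
        (∀ p, (∀ q, grB p q = 0) → p = 0) ∧
        (∀ q, (∀ p, grB p q = 0) → q = 0)) ↔
    (∀ l, l ≤ m →
      Module.finrank k (W l ⧸ (prevFil W l).comap (W l).subtype) =
        Module.finrank k (W (m - l) ⧸ (prevFil W (m - l)).comap (W (m - l)).subtype)) := by
  constructor
  · intro hpair l hl
    obtain ⟨grB, -, hleft, hright⟩ := hpair l hl
    have := Nondegenerate.isPerfPair ⟨hleft, hright⟩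
    exact finrank_of_isPerfPair grB
  · intro hsymm l hl
    have hdim := finrank_prevFil_add_finrank_of_symm hchain htop hsymm (m - l) (by omega)
    rw [Nat.sub_sub_self hl] at hdim
    have hperp := BilinForm.eq_orthogonal_of_finrank_add_eq hBl
      (fun y hy x hx => apply_eq_zero_of_mem_prevFil_right B horth (by omega) x hx y hy) hdim
    let grB := subquotientPairing B
      (apply_eq_zero_of_mem_prevFil_left B horth (l := l) (l' := m - l) (by omega))
      (apply_eq_zero_of_mem_prevFil_right B horth (l := l) (l' := m - l) (by omega))
    have hright : grB.SeparatingRight := subquotientPairing_separatingRight _ _ hperp.ge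
    have := hright.isPerfPair_of_finrank_eq (hsymm l hl)
    exact ⟨grB, fun _ _ => rfl, IsPerfPair.nondegenerate⟩

/-- For a nondegenerate bilinear form `B` on a finite-dimensional space `V` filtered by
`W_0 ⊆ … ⊆ W_m = V` with `B(W_l, W_{l'}) = 0` for `l + l' < m`, the induced pairings
`gr B : (W_l/W_{l−1}) × (W_{m−l}/W_{m−l−1}) → k` are all nondegenerate if and only if
`dim (W_l/W_{l−1}) = dim (W_{m−l}/W_{m−l−1})` for all `0 ≤ l ≤ m`. -/
theorem statement8 (k V : Type*) [Field k] [AddCommGroup V] [Module k V]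
    [FiniteDimensional k V]
    (B : V →ₗ[k] V →ₗ[k] k)
    (hBl : ∀ v : V, (∀ w : V, B v w = 0) → v = 0)
    (hBr : ∀ w : V, (∀ v : V, B v w = 0) → w = 0)
    (m : ℕ) (W : ℕ → Submodule k V)
    (hchain : ∀ l, l < m → W l ≤ W (l + 1)) (htop : W m = ⊤)
    (horth : ∀ l l', l + l' < m → ∀ f ∈ W l, ∀ g ∈ W l', B f g = 0) :
    (∀ l, l ≤ m →
      ∃ grB : (W l ⧸ (prevFil W l).comap (W l).subtype) →ₗ[k]
          (W (m - l) ⧸ (prevFil W (m - l)).comap (W (m - l)).subtype) →ₗ[k] k,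
        (∀ (f : W l) (g : W (m - l)),
          grB (Submodule.Quotient.mk f) (Submodule.Quotient.mk g) = B (f : V) (g : V)) ∧
        (∀ p, (∀ q, grB p q = 0) → p = 0) ∧
        (∀ q, (∀ p, grB p q = 0) → q = 0)) ↔
    (∀ l, l ≤ m →
      Module.finrank k (W l ⧸ (prevFil W l).comap (W l).subtype) =
        Module.finrank k (W (m - l) ⧸ (prevFil W (m - l)).comap (W (m - l)).subtype)) :=
  statement8_general k V B hBl m W hchain htop horth
end
end
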